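/- arXiv:2501.08842 — 5 statements merged into one kernel-verified Lean document; each statement's English description precedes it below -/
import Mathlib

section
/- Let x₀, y₁, x₂, y₂, p_{x₀}, p_{y₁}, p_{x₂}, p_{y₂} : ℝ → ℝ be differentiable functions satisfying the Hamiltonian system of the sphere: x₀' = 6p_{y₁}; y₁' = 6p_{x₀} − 2(x₂²+y₂²)p_{y₁} + 2y₂p_{x₂} − 2x₂p_{y₂}; x₂' = 2y₂p_{y₁} − 2p_{x₂}; y₂' = −2x₂p_{y₁} − 2p_{y₂}; p_{x₀}' = 0; p_{y₁}' = 0; p_{x₂}' = 2x₂p_{y₁}² + 2p_{y₁}p_{y₂}; p_{y₂}' = 2y₂p_{y₁}² − 2p_{y₁}p_{x₂}, and set c := 4·p_{y₁}(0). If c ≠ 0, then there exist constants c₁, c₂ ∈ ℂ and real constants c̃₁, c̃₂, c̃₃, c̃₄ such that for all t ∈ ℝ: x₂(t) + i y₂(t) = c₁ e^{−ict} + c₂ and y₁(t) = c̃₁ t + c̃₂ cos(ct) + c̃₃ sin(ct) + c̃₄. -/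
open Complex Real ComplexConjugate

/-! Put `z = x₂ + i y₂` and `w = p_{x₂} + i p_{y₂}`. The momenta `p_{x₀}` and `p_{y₁} = c/4` are
constant, so `(z, w)` solves a linear system with constant coefficients, under which `v := z'`
satisfies `v' = -icv`. Hence `v = v(0) e^{-ict}` and `z` runs along the circle `c₁ e^{-ict} + c₂`.
Finally `y₁' = 6 p_{x₀} + Im (z̄ z')`, which along this circle is `α + β cos(ct) + γ sin(ct)`, and
integrating gives the formula for `y₁`. -/

theorem eq_of_hasDerivAt_zero {E : Type*} [NormedAddCommGroup E] [NormedSpace ℝ E]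
    {f : ℝ → E} (hf : ∀ t, HasDerivAt f 0 t) (t : ℝ) : f t = f 0 :=
  is_const_of_deriv_eq_zero (fun s => (hf s).differentiableAt) (fun s => (hf s).deriv) t 0

theorem hasDerivAt_cexp_mul (k : ℂ) (t : ℝ) :
    HasDerivAt (fun s : ℝ => cexp (k * s)) (k * cexp (k * t)) t := by
  simpa [mul_comm] using (((hasDerivAt_id t).ofReal_comp).const_mul k).cexp

theorem eq_mul_cexp_of_hasDerivAt {f : ℝ → ℂ} {k : ℂ}
    (hf : ∀ t : ℝ, HasDerivAt f (k * f t) t) (t : ℝ) : f t = f 0 * cexp (k * t) := by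
  have hconst : ∀ s, HasDerivAt (fun s : ℝ => f s * cexp (-k * s)) 0 s := fun s =>
    ((hf s).mul (hasDerivAt_cexp_mul (-k) s)).congr_deriv (by ring)
  have h := eq_of_hasDerivAt_zero hconst t
  simp only [ofReal_zero, mul_zero, Complex.exp_zero, mul_one] at h
  rw [← h, mul_assoc, ← Complex.exp_add]
  simp

theorem eq_div_mul_cexp_add_of_hasDerivAt {f : ℝ → ℂ} {k v : ℂ} (hk : k ≠ 0)
    (hf : ∀ t : ℝ, HasDerivAt f (v * cexp (k * t)) t) (t : ℝ) :
    f t = v / k * cexp (k * t) + (f 0 - v / k) := by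
  have hconst : ∀ s, HasDerivAt (fun s : ℝ => f s - v / k * cexp (k * s)) 0 s := fun s =>
    ((hf s).sub ((hasDerivAt_cexp_mul k s).const_mul (v / k))).congr_deriv (by field_simp; ring)
  have h := eq_of_hasDerivAt_zero hconst t
  simp only [ofReal_zero, mul_zero, Complex.exp_zero, mul_one] at h
  linear_combination h

theorem eq_of_hasDerivAt_add_cos_add_sin {y : ℝ → ℝ} {α β γ c : ℝ} (hc : c ≠ 0)
    (hy : ∀ t, HasDerivAt y (α + β * Real.cos (c * t) + γ * Real.sin (c * t)) t) (t : ℝ) :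
    y t = α * t + -γ / c * Real.cos (c * t) + β / c * Real.sin (c * t) + (y 0 + γ / c) := by
  have hconst : ∀ s, HasDerivAt
      (fun s => y s - (α * s + -γ / c * Real.cos (c * s) + β / c * Real.sin (c * s))) 0 s := by
    intro s
    have hcs : HasDerivAt (fun r => c * r) c s := by simpa using (hasDerivAt_id s).const_mul c
    refine ((hy s).sub ((((hasDerivAt_id s).const_mul α).add (hcs.cos.const_mul _)).add
      (hcs.sin.const_mul _))).congr_deriv ?_
    field_simp
    ring
  have h := eq_of_hasDerivAt_zero hconst t
  simp only [mul_zero, Real.cos_zero, Real.sin_zero, zero_add, add_zero, mul_one] at h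
  linear_combination h

theorem HasDerivAt.ofReal_add_ofReal_mul_I {x y : ℝ → ℝ} {x' y' t : ℝ}
    (hx : HasDerivAt x x' t) (hy : HasDerivAt y y' t) :
    HasDerivAt (fun s => (x s : ℂ) + y s * I) (x' + y' * I) t :=
  hx.ofReal_comp.add (hy.ofReal_comp.mul_const I)

theorem cexp_neg_I_mul_ofReal (θ : ℝ) : cexp (-I * θ) = Real.cos θ - Real.sin θ * I := by
  rw [show -I * θ = ((-θ : ℝ) : ℂ) * I by push_cast; ring, exp_mul_I, ← ofReal_cos,
    ← ofReal_sin, Real.cos_neg, Real.sin_neg]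
  push_cast
  ring

theorem im_conj_circle_mul_deriv (c t : ℝ) (c1 c2 : ℂ) :
    (conj (c1 * cexp (-I * c * t) + c2) * (-I * c * c1 * cexp (-I * c * t))).im
      = -c * normSq c1 + -c * (c1 * conj c2).re * Real.cos (c * t)
        + -c * (c1 * conj c2).im * Real.sin (c * t) := by
  rw [mul_assoc (-I), ← ofReal_mul, cexp_neg_I_mul_ofReal]
  simp only [map_add, map_mul, map_sub, conj_ofReal, conj_I, mul_re, mul_im, add_re, add_im,
    sub_re, sub_im, ofReal_re, ofReal_im, I_re, I_im, conj_re, conj_im, neg_re, neg_im,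
    normSq_apply]
  linear_combination (-c * (c1.re * c1.re + c1.im * c1.im)) * Real.sin_sq_add_cos_sq (c * t)

theorem exists_eq_of_hasDerivAt_im_conj_mul {y : ℝ → ℝ} {b c : ℝ} {c1 c2 : ℂ} (hc : c ≠ 0)
    (hy : ∀ t : ℝ, HasDerivAt y
      (b + (conj (c1 * cexp (-I * c * t) + c2) * (-I * c * c1 * cexp (-I * c * t))).im) t) :
    ∃ d1 d2 d3 d4 : ℝ, ∀ t : ℝ,
      y t = d1 * t + d2 * Real.cos (c * t) + d3 * Real.sin (c * t) + d4 := by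
  simp only [im_conj_circle_mul_deriv, ← add_assoc] at hy
  exact ⟨_, _, _, _, eq_of_hasDerivAt_add_cos_add_sin hc hy⟩

theorem exists_eq_cexp_of_hasDerivAt_sphere_flow {Z W : ℝ → ℂ} {a : ℝ} (ha : a ≠ 0)
    (hZ : ∀ t : ℝ, HasDerivAt Z (-2 * I * a * Z t - 2 * W t) t)
    (hW : ∀ t : ℝ, HasDerivAt W (2 * a ^ 2 * Z t - 2 * I * a * W t) t) :
    ∃ c1 c2 : ℂ, ∀ t : ℝ, Z t = c1 * cexp (-I * (4 * a) * t) + c2 ∧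
      -2 * I * a * Z t - 2 * W t = -I * (4 * a) * c1 * cexp (-I * (4 * a) * t) := by
  set k : ℂ := -I * (4 * a)
  have hk : k ≠ 0 := by simp [k, ha]
  set V : ℝ → ℂ := fun t => -2 * I * a * Z t - 2 * W t
  have hV : ∀ t, HasDerivAt V (k * V t) t := fun t =>
    (((hZ t).const_mul _).sub ((hW t).const_mul 2)).congr_deriv (by
      simp only [V, k]; linear_combination (-4 * a ^ 2 * Z t) * I_sq)
  have hVt := eq_mul_cexp_of_hasDerivAt hV
  have hZt := eq_div_mul_cexp_add_of_hasDerivAt hk fun t => (hZ t).congr_deriv (hVt t)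
  refine ⟨V 0 / k, Z 0 - V 0 / k, fun t => ⟨hZt t, ?_⟩⟩
  rw [show -2 * I * a * Z t - 2 * W t = V t from rfl, hVt t]
  field_simp

theorem sphere_chains_explicit_general
    (y1 x2 y2 p0 p1 p2 p3 : ℝ → ℝ)
    (hy1 : ∀ t, HasDerivAt y1
      (6 * p0 t - 2 * (x2 t ^ 2 + y2 t ^ 2) * p1 t + 2 * y2 t * p2 t - 2 * x2 t * p3 t) t)
    (hx2 : ∀ t, HasDerivAt x2 (2 * y2 t * p1 t - 2 * p2 t) t)
    (hy2 : ∀ t, HasDerivAt y2 (-2 * x2 t * p1 t - 2 * p3 t) t)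
    (hp0 : ∀ t, HasDerivAt p0 0 t)
    (hp1 : ∀ t, HasDerivAt p1 0 t)
    (hp2 : ∀ t, HasDerivAt p2 (2 * x2 t * p1 t ^ 2 + 2 * p1 t * p3 t) t)
    (hp3 : ∀ t, HasDerivAt p3 (2 * y2 t * p1 t ^ 2 - 2 * p1 t * p2 t) t)
    (c : ℝ) (hc : c = 4 * p1 0) (hc0 : c ≠ 0) :
    ∃ c1 c2 : ℂ, ∃ d1 d2 d3 d4 : ℝ, ∀ t : ℝ,
      (x2 t : ℂ) + (y2 t : ℂ) * Complex.I
          = c1 * Complex.exp (-Complex.I * (c : ℂ) * (t : ℂ)) + c2 ∧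
      y1 t = d1 * t + d2 * Real.cos (c * t) + d3 * Real.sin (c * t) + d4 := by
  set a := p1 0
  have hp1a : ∀ t, p1 t = a := eq_of_hasDerivAt_zero hp1
  have hp0c : ∀ t, p0 t = p0 0 := eq_of_hasDerivAt_zero hp0
  have hca : (c : ℂ) = 4 * a := by rw [hc]; push_cast; rfl
  set Z : ℝ → ℂ := fun t => x2 t + y2 t * I
  set W : ℝ → ℂ := fun t => p2 t + p3 t * I
  have hZ : ∀ t, HasDerivAt Z (-2 * I * a * Z t - 2 * W t) t := fun t =>
    ((hx2 t).ofReal_add_ofReal_mul_I (hy2 t)).congr_deriv (by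
      push_cast [Z, W, hp1a]; linear_combination (2 * a * y2 t) * I_sq)
  have hW : ∀ t, HasDerivAt W (2 * a ^ 2 * Z t - 2 * I * a * W t) t := fun t =>
    ((hp2 t).ofReal_add_ofReal_mul_I (hp3 t)).congr_deriv (by
      push_cast [Z, W, hp1a]; linear_combination (2 * a * p3 t) * I_sq)
  have ha : a ≠ 0 := right_ne_zero_of_mul (hc ▸ hc0)
  obtain ⟨c1, c2, hZW⟩ := exists_eq_cexp_of_hasDerivAt_sphere_flow ha hZ hW
  simp only [← hca] at hZW
  have hy1' : ∀ t, HasDerivAt y1 (6 * p0 0 + (conj (Z t) * (-2 * I * a * Z t - 2 * W t)).im) t :=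
    fun t => (hy1 t).congr_deriv (by
      simp only [Z, W, hp0c, hp1a, map_add, map_mul, conj_ofReal, conj_I, mul_im, mul_re, add_re,
        add_im, sub_re, sub_im, neg_re, neg_im, ofReal_re, ofReal_im, I_re, I_im, re_ofNat, im_ofNat]
      ring)
  obtain ⟨d1, d2, d3, d4, hy⟩ :=
    exists_eq_of_hasDerivAt_im_conj_mul hc0 fun t => by
      rw [← (hZW t).1, ← (hZW t).2]; exact hy1' t
  exact ⟨c1, c2, d1, d2, d3, d4, fun t => ⟨(hZW t).1, hy t⟩⟩

/-- The chains of the sphere: any global solution of the Hamiltonian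
system of the sphere with `c := 4 p_{y₁}(0) ≠ 0` satisfies
`z₂(t) = c₁ e^{−ict} + c₂` and `y₁(t) = c̃₁ t + c̃₂ cos(ct) + c̃₃ sin(ct) + c̃₄`. -/
theorem sphere_chains_explicit
    (x0 y1 x2 y2 p0 p1 p2 p3 : ℝ → ℝ)
    (hx0 : ∀ t, HasDerivAt x0 (6 * p1 t) t)
    (hy1 : ∀ t, HasDerivAt y1
      (6 * p0 t - 2 * (x2 t ^ 2 + y2 t ^ 2) * p1 t + 2 * y2 t * p2 t - 2 * x2 t * p3 t) t)
    (hx2 : ∀ t, HasDerivAt x2 (2 * y2 t * p1 t - 2 * p2 t) t)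
    (hy2 : ∀ t, HasDerivAt y2 (-2 * x2 t * p1 t - 2 * p3 t) t)
    (hp0 : ∀ t, HasDerivAt p0 0 t)
    (hp1 : ∀ t, HasDerivAt p1 0 t)
    (hp2 : ∀ t, HasDerivAt p2 (2 * x2 t * p1 t ^ 2 + 2 * p1 t * p3 t) t)
    (hp3 : ∀ t, HasDerivAt p3 (2 * y2 t * p1 t ^ 2 - 2 * p1 t * p2 t) t)
    (c : ℝ) (hc : c = 4 * p1 0) (hc0 : c ≠ 0) :
    ∃ c1 c2 : ℂ, ∃ d1 d2 d3 d4 : ℝ, ∀ t : ℝ,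
      (x2 t : ℂ) + (y2 t : ℂ) * Complex.I
          = c1 * Complex.exp (-Complex.I * (c : ℂ) * (t : ℂ)) + c2 ∧
      y1 t = d1 * t + d2 * Real.cos (c * t) + d3 * Real.sin (c * t) + d4 :=
  sphere_chains_explicit_general y1 x2 y2 p0 p1 p2 p3 hy1 hx2 hy2 hp0 hp1 hp2 hp3 c hc hc0
end

section
/- Let λ ∈ ℂ∖{0}, a ∈ ℂ and t ∈ ℝ, and define D(z₁,z₂) = 1 + 2·conj(a)·z₂ + (|a|² + it)·z₁, g(z₁,z₂) = |λ|²·z₁ / D(z₁,z₂) and f(z₁,z₂) = λ·(z₂ + a·z₁) / D(z₁,z₂). Then for every (z₁,z₂) ∈ ℂ² with Re z₁ = |z₂|² and D(z₁,z₂) ≠ 0, one has Re g(z₁,z₂) = |f(z₁,z₂)|². In particular the map H = (g, f) maps the Heisenberg hypersurface ℍ² into itself wherever it is defined, and H(0,0) = (0,0). -/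
open Complex ComplexConjugate

/-- The denominator of the automorphisms of the Heisenberg hypersurface. -/
noncomputable def heisDenom (a : ℂ) (t : ℝ) (z1 z2 : ℂ) : ℂ :=
  1 + 2 * conj a * z2 + (((‖a‖ ^ 2 : ℝ) : ℂ) + Complex.I * (t : ℂ)) * z1

/-- First component `g` of the automorphism `H = (g, f)`. -/
noncomputable def heisG (lam a : ℂ) (t : ℝ) (z1 z2 : ℂ) : ℂ :=
  ((‖lam‖ ^ 2 : ℝ) : ℂ) * z1 / heisDenom a t z1 z2

/-- Second component `f` of the automorphism `H = (g, f)`. -/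
noncomputable def heisF (lam a : ℂ) (t : ℝ) (z1 z2 : ℂ) : ℂ :=
  lam * (z2 + a * z1) / heisDenom a t z1 z2

/-! With `D = heisDenom a t z₁ z₂`, one has `Re g = |λ|² Re (z₁ · conj D) / |D|²` and
`|f|² = |λ|² |z₂ + a z₁|² / |D|²`, so it suffices that `Re (z₁ · conj D) = |z₂ + a z₁|²` on the
hypersurface. Expanding, both sides equal `Re z₁ + 2 Re (a z₁ conj z₂) + |a|² |z₁|²` once `|z₂|²`
is replaced by `Re z₁`; the term `-i t |z₁|²` is purely imaginary. -/

theorem Complex.div_re_eq_mul_conj_re_div_normSq (w D : ℂ) :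
    (w / D).re = (w * conj D).re / normSq D := by
  rw [div_eq_mul_inv, inv_def, ← mul_assoc, re_mul_ofReal, div_eq_mul_inv]

theorem re_mul_conj_heisDenom (a : ℂ) (t : ℝ) {z1 z2 : ℂ} (hz : z1.re = ‖z2‖ ^ 2) :
    (z1 * conj (heisDenom a t z1 z2)).re = normSq (z2 + a * z1) := by
  rw [Complex.sq_norm, normSq_apply] at hz
  simp only [heisDenom, normSq_apply, map_add, map_mul, map_one, conj_conj, conj_ofReal, conj_I,
    map_ofNat, mul_re, mul_im, add_re, add_im, one_re, one_im, conj_re, conj_im, ofReal_re,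
    ofReal_im, neg_re, neg_im, I_re, I_im, re_ofNat, im_ofNat, Complex.sq_norm]
  linear_combination hz

theorem heisenberg_automorphism_general (lam : ℂ) (a : ℂ) (t : ℝ) :
    (∀ z1 z2 : ℂ, z1.re = ‖z2‖ ^ 2 → heisDenom a t z1 z2 ≠ 0 →
      (heisG lam a t z1 z2).re = ‖heisF lam a t z1 z2‖ ^ 2) ∧
    heisG lam a t 0 0 = 0 ∧ heisF lam a t 0 0 = 0 := by
  refine ⟨fun z1 z2 hz _ => ?_, by simp [heisG], by simp [heisF]⟩
  rw [heisG, div_re_eq_mul_conj_re_div_normSq, mul_assoc, re_ofReal_mul,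
    re_mul_conj_heisDenom a t hz, heisF, Complex.sq_norm, Complex.sq_norm, normSq_div, normSq_mul]

/-- The maps `H = (g, f)` preserve the Heisenberg hypersurface
`Re z₁ = |z₂|²` wherever they are defined, and fix the origin. -/
theorem heisenberg_automorphism (lam : ℂ) (hlam : lam ≠ 0) (a : ℂ) (t : ℝ) :
    (∀ z1 z2 : ℂ, z1.re = ‖z2‖ ^ 2 → heisDenom a t z1 z2 ≠ 0 →
      (heisG lam a t z1 z2).re = ‖heisF lam a t z1 z2‖ ^ 2) ∧
    heisG lam a t 0 0 = 0 ∧ heisF lam a t 0 0 = 0 :=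
  heisenberg_automorphism_general lam a t
end

section
/- Let φ : b𝔻 → ℂ be a continuous function on the unit circle. Then φ admits an extension F : closure(𝔻) → ℂ which is continuous on closure(𝔻) and holomorphic on the open unit disc 𝔻 with F = φ on b𝔻, if and only if the moment conditions hold: ∫₀^{2π} φ(e^{iθ}) e^{i(m+1)θ} dθ = 0 for every integer m ≥ 0 (equivalently, the contour integral of ζ^m φ(ζ) dζ over b𝔻 vanishes for all m ≥ 0). -/
/-!
Necessity is Cauchy's theorem for `ζ ^ m * F ζ`. For sufficiency, extend `φ` into the disc by its
Cauchy integral. On the unit circle the Poisson kernel splits as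
`P(w, ζ) = ζ / (ζ - w) + w̄ ζ / (1 - w̄ ζ)`; expanding the second summand as a geometric series in
`w̄ ζ`, the moment conditions make its integral against `φ` vanish, so the Cauchy integral of `φ`
is its Poisson integral. The Poisson kernel is a positive kernel of mass one that concentrates at
`ζ₀` as `w → ζ₀`, hence the Poisson integral tends to `φ ζ₀` and the extension is continuous up
to the circle.
-/

open Complex Metric

open Real Set Filter Topology ComplexConjugate

theorem norm_circleAverage_le_of_norm_le {E : Type*} [NormedAddCommGroup E] [NormedSpace ℝ E]
    {f : ℂ → E} {g : ℂ → ℝ} {c : ℂ} {R : ℝ} (hg : CircleIntegrable g c R)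
    (hfg : ∀ z ∈ sphere c |R|, ‖f z‖ ≤ g z) :
    ‖circleAverage f c R‖ ≤ circleAverage g c R := by
  rw [circleAverage_def, circleAverage_def, norm_smul, smul_eq_mul, norm_inv,
    Real.norm_of_nonneg two_pi_pos.le]
  gcongr
  exact intervalIntegral.norm_integral_le_of_norm_le two_pi_pos.le
    (.of_forall fun θ _ ↦ hfg _ (circleMap_mem_sphere' c R θ)) hg

variable {E : Type*} [NormedAddCommGroup E] [NormedSpace ℂ E]

section PoissonKernel

variable {c w z : ℂ} {R δ : ℝ}

theorem poissonKernel_nonneg (hz : z ∈ sphere c R) (hw : w ∈ ball c R) :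
    0 ≤ poissonKernel c w z := by
  rw [mem_sphere_iff_norm] at hz
  rw [mem_ball_iff_norm] at hw
  rw [poissonKernel_def, hz]
  have : ‖w - c‖ ^ 2 ≤ R ^ 2 := by gcongr
  exact div_nonneg (sub_nonneg.2 this) (sq_nonneg _)

theorem poissonKernel_le (hz : z ∈ sphere c R) (hw : w ∈ ball c R) (hδ : 0 < δ)
    (hzw : δ ≤ ‖z - w‖) : poissonKernel c w z ≤ (R ^ 2 - ‖w - c‖ ^ 2) / δ ^ 2 := by
  rw [mem_sphere_iff_norm] at hz
  rw [mem_ball_iff_norm] at hw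
  rw [poissonKernel_def, hz, sub_sub_sub_cancel_right]
  have : ‖w - c‖ ^ 2 ≤ R ^ 2 := by gcongr
  gcongr

theorem continuousOn_poissonKernel_sphere (hw : w ∈ ball c R) :
    ContinuousOn (poissonKernel c w) (sphere c |R|) := by
  rw [poissonKernel_eq_re_herglotzRieszKernel]
  exact continuous_re.comp_continuousOn (continuousOn_herglotzRieszKernel_sphere hw)

theorem circleAverage_poissonKernel (hw : w ∈ ball c R) :
    circleAverage (poissonKernel c w) c R = 1 := by
  have h := (diffContOnCl_const (c := (1 : ℂ))).circleAverage_poissonKernel_smul hw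
  rw [← ofReal_inj, ofReal_one, ← h, ← ofRealCLM_apply, ← ofRealCLM.circleAverage_comp_comm]
  · congr 1
    ext z
    simp
  · exact (continuousOn_poissonKernel_sphere hw).circleIntegrable'

variable [CompleteSpace E] {g : ℂ → E} {ζ : ℂ} {ε M : ℝ}

theorem norm_circleAverage_poissonKernel_smul_sub_le (hg : ContinuousOn g (sphere c R))
    (hζ : ζ ∈ sphere c R) (hw : w ∈ ball c R) (hδ : 0 < δ) (hwζ : dist w ζ ≤ δ / 2)
    (hε : ∀ z ∈ sphere c R, dist z ζ < δ → dist (g z) (g ζ) ≤ ε)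
    (hM : ∀ z ∈ sphere c R, ‖g z‖ ≤ M) :
    ‖circleAverage (poissonKernel c w • g) c R - g ζ‖
      ≤ ε + 2 * M * ((R ^ 2 - ‖w - c‖ ^ 2) / (δ / 2) ^ 2) := by
  have hR0 : 0 ≤ R := (mem_sphere.1 hζ) ▸ dist_nonneg
  have hR : |R| = R := abs_of_nonneg hR0
  set S := (R ^ 2 - ‖w - c‖ ^ 2) / (δ / 2) ^ 2
  have hS : 0 ≤ S := by
    have : ‖w - c‖ ^ 2 ≤ R ^ 2 := by gcongr; exact (mem_ball_iff_norm.1 hw).le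
    exact div_nonneg (sub_nonneg.2 this) (sq_nonneg _)
  have hM0 : 0 ≤ M := (norm_nonneg _).trans (hM ζ hζ)
  have hε0 : 0 ≤ ε := by simpa using hε ζ hζ (by simpa using hδ)
  have hK := continuousOn_poissonKernel_sphere hw
  have hpt : ∀ z ∈ sphere c |R|, ‖poissonKernel c w z • (g z - g ζ)‖
      ≤ ε * poissonKernel c w z + 2 * M * S := by
    rw [hR]
    intro z hz
    have hKz := poissonKernel_nonneg hz hw
    rw [norm_smul, Real.norm_of_nonneg hKz]
    by_cases hzζ : dist z ζ < δ
    · have hgz := hε z hz hzζ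
      rw [dist_eq_norm] at hgz
      nlinarith [mul_nonneg hM0 hS]
    · have hzw : δ / 2 ≤ ‖z - w‖ := by
        rw [← dist_eq_norm]
        linarith [dist_triangle z w ζ]
      have hgz : ‖g z - g ζ‖ ≤ 2 * M := by
        linarith [norm_sub_le (g z) (g ζ), hM z hz, hM ζ hζ]
      nlinarith [poissonKernel_le hz hw (half_pos hδ) hzw, mul_nonneg hε0 hKz]
  calc ‖circleAverage (poissonKernel c w • g) c R - g ζ‖
      = ‖circleAverage (fun z ↦ poissonKernel c w z • (g z - g ζ)) c R‖ := by
        have hconst : circleAverage (fun z ↦ poissonKernel c w z • g ζ) c R = g ζ :=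
          diffContOnCl_const.circleAverage_poissonKernel_smul hw
        simp_rw [smul_sub]
        rw [circleAverage_fun_sub, hconst]
        · rfl
        · exact (hg.circleIntegrable hR0).continuousOn_smul (𝕜 := ℝ) hK
        · exact (circleIntegrable_const _ c R).continuousOn_smul (𝕜 := ℝ) hK
    _ ≤ circleAverage (fun z ↦ ε * poissonKernel c w z + 2 * M * S) c R :=
        norm_circleAverage_le_of_norm_le
          (hK.circleIntegrable'.const_fun_smul.add (circleIntegrable_const _ c R)) hpt
    _ = ε + 2 * M * S := by
        change circleAverage (fun z ↦ ε • poissonKernel c w z + 2 * M * S) c R = _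
        rw [circleAverage_fun_add hK.circleIntegrable'.const_fun_smul
          (circleIntegrable_const _ c R), circleAverage_fun_smul, circleAverage_poissonKernel hw,
          circleAverage_const, smul_eq_mul, mul_one]

theorem tendsto_circleAverage_poissonKernel_smul (hg : ContinuousOn g (sphere c R))
    (hζ : ζ ∈ sphere c R) :
    Tendsto (fun w ↦ circleAverage (poissonKernel c w • g) c R) (𝓝[ball c R] ζ) (𝓝 (g ζ)) := by
  obtain ⟨M, hM⟩ := (isCompact_sphere c R).exists_bound_of_continuousOn hg
  rw [Metric.tendsto_nhds]
  intro ε hε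
  obtain ⟨δ, hδ, hgδ⟩ := Metric.continuousWithinAt_iff.1 (hg ζ hζ) (ε / 2) (half_pos hε)
  have hS : Tendsto (fun w ↦ 2 * M * ((R ^ 2 - ‖w - c‖ ^ 2) / (δ / 2) ^ 2)) (𝓝 ζ) (𝓝 0) := by
    have hcont : Continuous fun w ↦ 2 * M * ((R ^ 2 - ‖w - c‖ ^ 2) / (δ / 2) ^ 2) := by fun_prop
    simpa [mem_sphere_iff_norm.1 hζ] using hcont.tendsto ζ
  filter_upwards [self_mem_nhdsWithin, nhdsWithin_le_nhds (ball_mem_nhds ζ (half_pos hδ)),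
    nhdsWithin_le_nhds (hS (gt_mem_nhds (half_pos hε)))] with w hw hwζ hSw
  rw [dist_eq_norm]
  calc _ ≤ ε / 2 + 2 * M * ((R ^ 2 - ‖w - c‖ ^ 2) / (δ / 2) ^ 2) :=
        norm_circleAverage_poissonKernel_smul_sub_le hg hζ hw hδ hwζ.le
          (fun z hz hzζ ↦ (hgδ hz hzζ).le) hM
    _ < ε / 2 + ε / 2 := by gcongr; exact hSw
    _ = ε := add_halves ε

end PoissonKernel

section CauchyIntegral

noncomputable def cauchyIntegral (f : ℂ → E) (c : ℂ) (R : ℝ) (w : ℂ) : E :=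
  (2 * π * I)⁻¹ • ∮ z in C(c, R), (z - w)⁻¹ • f z

theorem differentiableOn_cauchyIntegral [CompleteSpace E] {f : ℂ → E} {c : ℂ} {R : ℝ}
    (hf : CircleIntegrable f c R) (hR : 0 < R) :
    DifferentiableOn ℂ (cauchyIntegral f c R) (ball c R) := by
  lift R to NNReal using hR.le
  have h := (hasFPowerSeriesOn_cauchy_integral hf (by exact_mod_cast hR)).differentiableOn
  rwa [Metric.eball_coe] at h

theorem DiffContOnCl.circleAverage_sub_pow_succ_smul_eq_zero {F : ℂ → E} {c : ℂ} {R : ℝ}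
    (hF : DiffContOnCl ℂ F (ball c R)) (hR : 0 < R) (n : ℕ) :
    Real.circleAverage (fun z ↦ (z - c) ^ (n + 1) • F z) c R = 0 := by
  rw [circleAverage_eq_circleIntegral hR.ne']
  convert smul_zero _
  calc ∮ z in C(c, R), (z - c)⁻¹ • (z - c) ^ (n + 1) • F z
      = ∮ z in C(c, R), (z - c) ^ n • F z := by
        refine circleIntegral.integral_congr hR.le fun z hz ↦ ?_
        have : z - c ≠ 0 := sub_ne_zero.2 (ne_of_mem_sphere hz hR.ne')
        rw [smul_smul, pow_succ', inv_mul_cancel_left₀ this]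
    _ = 0 := ((Differentiable.diffContOnCl (by fun_prop)).smul hF).circleIntegral_eq_zero hR.le

end CauchyIntegral

section UnitCircle

variable {φ : ℂ → E} {v w ζ : ℂ}

theorem one_sub_conj_mul_ne_zero (hζ : ζ ∈ sphere 0 1) (hw : w ∈ ball 0 1) :
    1 - conj w * ζ ≠ 0 := by
  have : ‖conj w * ζ‖ < 1 := by simpa [mem_sphere_zero_iff_norm.1 hζ] using hw
  exact sub_ne_zero.2 fun h ↦ by simp [← h] at this

theorem ofReal_poissonKernel_zero_eq (hζ : ζ ∈ sphere 0 1) (hw : w ∈ ball 0 1) :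
    (poissonKernel 0 w ζ : ℂ) = ζ / (ζ - w) + conj w * ζ / (1 - conj w * ζ) := by
  have hζw : ζ - w ≠ 0 := sub_ne_zero.2 (sphere_disjoint_ball.ne_of_mem hζ hw)
  have hζw' : conj ζ - conj w ≠ 0 := by simpa [← map_sub] using hζw
  have hwζ := one_sub_conj_mul_ne_zero hζ hw
  rw [mem_sphere_zero_iff_norm] at hζ
  have hζζ : ζ * conj ζ = 1 := by simp [mul_conj', hζ]
  simp only [poissonKernel_def, sub_zero, hζ]
  push_cast
  rw [← mul_conj', ← mul_conj', map_sub, div_add_div _ _ hζw hwζ,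
    div_eq_div_iff (mul_ne_zero hζw hζw') (mul_ne_zero hζw hwζ)]
  linear_combination (w * conj w - 1) * (ζ - w) * hζζ

theorem hasSum_circleAverage_geometric_smul (hφ : CircleIntegrable φ 0 1) (hv : ‖v‖ < 1) :
    HasSum (fun n : ℕ ↦ circleAverage (fun ζ ↦ (v * ζ) ^ (n + 1) • φ ζ) 0 1)
      (circleAverage (fun ζ ↦ (v * ζ / (1 - v * ζ)) • φ ζ) 0 1) := by
  simp only [circleAverage_def]
  refine .const_smul _ <| intervalIntegral.hasSum_integral_of_dominated_convergence
    (fun n θ ↦ ‖v‖ ^ n * ‖φ (circleMap 0 1 θ)‖) (fun n ↦ ?_) (fun n ↦ ?_) ?_ ?_ ?_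
  · exact (Continuous.aestronglyMeasurable (by fun_prop)).smul
      (intervalIntegrable_iff.1 hφ).aestronglyMeasurable
  · refine .of_forall fun θ _ ↦ ?_
    simp only [norm_smul, norm_pow, norm_mul, norm_circleMap_zero, abs_one, mul_one]
    exact mul_le_mul_of_nonneg_right (pow_le_pow_of_le_one (norm_nonneg v) hv.le n.le_succ)
      (norm_nonneg _)
  · exact .of_forall fun θ _ ↦ (summable_geometric_of_lt_one (norm_nonneg v) hv).mul_right _
  · simpa only [tsum_mul_right] using hφ.norm.const_mul _
  · refine .of_forall fun θ _ ↦ ?_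
    have hq : ‖v * circleMap 0 1 θ‖ < 1 := by simpa [norm_circleMap_zero] using hv
    simpa [pow_succ', div_eq_mul_inv] using
      ((hasSum_geometric_of_norm_lt_one hq).mul_left _).smul_const (φ (circleMap 0 1 θ))

theorem circleAverage_geometric_smul_eq_zero (hφ : CircleIntegrable φ 0 1)
    (hm : ∀ n : ℕ, circleAverage (fun ζ ↦ ζ ^ (n + 1) • φ ζ) 0 1 = 0) (hv : ‖v‖ < 1) :
    circleAverage (fun ζ ↦ (v * ζ / (1 - v * ζ)) • φ ζ) 0 1 = 0 := by
  refine (hasSum_circleAverage_geometric_smul hφ hv).unique ?_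
  simp [mul_pow, mul_smul, circleAverage_fun_smul, hm, hasSum_zero]

theorem circleAverage_poissonKernel_smul_eq_cauchyIntegral (hφ : ContinuousOn φ (sphere 0 1))
    (hm : ∀ n : ℕ, circleAverage (fun ζ ↦ ζ ^ (n + 1) • φ ζ) 0 1 = 0) (hw : w ∈ ball 0 1) :
    circleAverage (poissonKernel 0 w • φ) 0 1 = cauchyIntegral φ 0 1 w := by
  have hφ' : CircleIntegrable φ 0 1 := hφ.circleIntegrable zero_le_one
  have hcauchy : ContinuousOn (fun ζ ↦ ζ / (ζ - w)) (sphere 0 |1|) := by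
    rw [abs_one]
    exact continuousOn_id.div (by fun_prop)
      fun ζ hζ ↦ sub_ne_zero.2 (sphere_disjoint_ball.ne_of_mem hζ hw)
  have hconj : ContinuousOn (fun ζ ↦ conj w * ζ / (1 - conj w * ζ)) (sphere 0 |1|) := by
    rw [abs_one]
    exact (by fun_prop : Continuous fun ζ ↦ conj w * ζ).continuousOn.div (by fun_prop)
      fun ζ hζ ↦ one_sub_conj_mul_ne_zero hζ hw
  calc circleAverage (poissonKernel 0 w • φ) 0 1
      = circleAverage
          (fun ζ ↦ (ζ / (ζ - w)) • φ ζ + (conj w * ζ / (1 - conj w * ζ)) • φ ζ) 0 1 :=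
        circleAverage_congr_sphere fun ζ hζ ↦ by
          rw [abs_one] at hζ
          rw [← add_smul, ← ofReal_poissonKernel_zero_eq hζ hw, Pi.smul_apply', coe_smul]
    _ = circleAverage (fun ζ ↦ (ζ / (ζ - w)) • φ ζ) 0 1 := by
        rw [circleAverage_fun_add (hφ'.fun_continuousOn_smul hcauchy)
          (hφ'.fun_continuousOn_smul hconj),
          circleAverage_geometric_smul_eq_zero hφ' hm (by simpa using hw), add_zero]
    _ = cauchyIntegral φ 0 1 w := by
        rw [circleAverage_eq_circleIntegral one_ne_zero, cauchyIntegral]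
        congr 1
        refine circleIntegral.integral_congr zero_le_one fun ζ hζ ↦ ?_
        have : ζ ≠ 0 := ne_zero_of_mem_sphere one_ne_zero ⟨ζ, hζ⟩
        simp only [sub_zero, smul_smul]
        congr 1
        field_simp

end UnitCircle

theorem continuousOn_piecewise_ball {X Y : Type*} [NormedAddCommGroup X] [NormedSpace ℝ X]
    [TopologicalSpace Y] {c : X} {R : ℝ} (hR : R ≠ 0) {f g : X → Y}
    [∀ x, Decidable (x ∈ ball c R)] (hf : ContinuousOn f (ball c R))
    (hg : ContinuousOn g (sphere c R))
    (hfg : ∀ x ∈ sphere c R, Tendsto f (𝓝[ball c R] x) (𝓝 (g x))) :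
    ContinuousOn ((ball c R).piecewise f g) (closedBall c R) := by
  have hball : closedBall c R ∩ ball c R = ball c R := inter_eq_right.2 ball_subset_closedBall
  have hsphere : closedBall c R ∩ (ball c R)ᶜ = sphere c R := by
    rw [← sdiff_eq, closedBall_sdiff_ball]
  refine ContinuousOn.piecewise' ?_ ?_ (by rwa [hball]) (by rwa [hsphere]) <;>
    rintro x ⟨-, hx⟩ <;> rw [frontier_ball c hR] at hx <;>
    rw [piecewise_eq_of_notMem _ _ _ (sphere_disjoint_ball.notMem_of_mem_left hx)]
  · rw [hball]
    exact hfg x hx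
  · rw [hsphere]
    exact hg x hx

theorem continuousOn_piecewise_cauchyIntegral_of_moments [CompleteSpace E] {φ : ℂ → E}
    [∀ z, Decidable (z ∈ ball (0 : ℂ) 1)] (hφ : ContinuousOn φ (sphere 0 1))
    (hm : ∀ n : ℕ, circleAverage (fun ζ ↦ ζ ^ (n + 1) • φ ζ) 0 1 = 0) :
    ContinuousOn ((ball 0 1).piecewise (cauchyIntegral φ 0 1) φ) (closedBall 0 1) :=
  continuousOn_piecewise_ball one_ne_zero
    (differentiableOn_cauchyIntegral (hφ.circleIntegrable zero_le_one) one_pos).continuousOn hφ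
    fun _ hζ ↦ (tendsto_circleAverage_poissonKernel_smul hφ hζ).congr' <|
      eventually_nhdsWithin_of_forall fun _ hw ↦
        circleAverage_poissonKernel_smul_eq_cauchyIntegral hφ hm hw

theorem circleAverage_pow_succ_smul_eq_zero_iff (φ : ℂ → ℂ) (m : ℕ) :
    circleAverage (fun ζ ↦ ζ ^ (m + 1) • φ ζ) 0 1 = 0 ↔
      ∫ θ in (0 : ℝ)..(2 * π), φ (exp (I * θ)) * exp (I * ((m : ℂ) + 1) * θ) = 0 := by
  rw [circleAverage_def, smul_eq_zero_iff_right (by positivity)]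
  refine Eq.congr_left (intervalIntegral.integral_congr fun θ _ ↦ ?_)
  simp only [circleMap, zero_add, ofReal_one, one_mul, smul_eq_mul, ← Complex.exp_nat_mul]
  push_cast
  ring_nf

/-- A continuous function on the unit circle extends continuously to the
closed disc and holomorphically to the open disc if and only if the moment conditions
`∫₀^{2π} φ(e^{iθ}) e^{i(m+1)θ} dθ = 0` hold for all integers `m ≥ 0`. -/
theorem holomorphic_extension_iff_moment_conditions
    (φ : ℂ → ℂ) (hφ : ContinuousOn φ (Metric.sphere (0 : ℂ) 1)) :
    (∃ F : ℂ → ℂ, ContinuousOn F (Metric.closedBall (0 : ℂ) 1) ∧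
        DifferentiableOn ℂ F (Metric.ball (0 : ℂ) 1) ∧
        ∀ ζ ∈ Metric.sphere (0 : ℂ) 1, F ζ = φ ζ) ↔
    (∀ m : ℕ, (∫ θ in (0 : ℝ)..(2 * Real.pi),
        φ (Complex.exp (Complex.I * (θ : ℂ))) *
          Complex.exp (Complex.I * ((m : ℂ) + 1) * (θ : ℂ))) = 0) := by
  classical
  simp only [← circleAverage_pow_succ_smul_eq_zero_iff]
  constructor
  · rintro ⟨F, hFc, hFd, hFφ⟩ m
    have hF : DiffContOnCl ℂ F (ball 0 1) := ⟨hFd, by rwa [closure_ball 0 one_ne_zero]⟩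
    calc circleAverage (fun ζ ↦ ζ ^ (m + 1) • φ ζ) 0 1
        = circleAverage (fun ζ ↦ (ζ - 0) ^ (m + 1) • F ζ) 0 1 :=
          circleAverage_congr_sphere fun ζ hζ ↦ by
            rw [abs_one] at hζ
            simp [hFφ ζ hζ]
      _ = 0 := hF.circleAverage_sub_pow_succ_smul_eq_zero one_pos m
  · intro hm
    refine ⟨(ball 0 1).piecewise (cauchyIntegral φ 0 1) φ,
      continuousOn_piecewise_cauchyIntegral_of_moments hφ hm, ?_, fun ζ hζ ↦ ?_⟩
    · exact (differentiableOn_cauchyIntegral (hφ.circleIntegrable zero_le_one) one_pos).congr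
        fun w hw ↦ piecewise_eq_of_mem _ _ _ hw
    · exact piecewise_eq_of_notMem _ _ _ (sphere_disjoint_ball.notMem_of_mem_left hζ)
end

section
/- Let ε, K, C₀ > 0 and for each s ∈ (0, ε] let ẑ(s, ·) : ℝ → ℂ be continuously differentiable in t, and let T_s ∈ [2π − 1/2, 2π + 1/2] be such that: (i) | ∂ẑ/∂t(s,t) − i·e^{it} | ≤ K·s⁴ for all t ∈ [2π − 1/2, 2π + 1/2]; (ii) | ẑ(s, 2π) − ẑ(s, 0) | ≤ C₀·s⁵; (iii) ẑ(s, T_s) = ẑ(s, 0); and (iv) T_s → 2π as s → 0⁺. Then there exist C₁ > 0 and s₀ > 0 such that | T_s − 2π | ≤ C₁·s⁵ for all 0 < s ≤ s₀. -/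
/-!
With `θ = T - 2π`, the mean value inequality applied to `ẑ(s, ·) - e^{i·}` on the interval
between `2π` and `T` shows that `ẑ(s, T) - ẑ(s, 2π)` differs from `e^{iθ} - 1` by at most
`K s⁴ |θ|`, and by (ii), (iii) the former is at most `C₀ s⁵` in norm. Jordan's inequality gives
`|e^{iθ} - 1| = 2 |sin (θ/2)| ≥ |θ| / 2`, so once `K s⁴ ≤ 1/4` we get `|θ| ≤ 4 C₀ s⁵`.
-/

open Complex Real

theorem two_div_pi_mul_abs_le_norm_exp_I_mul_sub_one {x : ℝ} (hx : |x| ≤ π) :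
    2 / π * |x| ≤ ‖exp (I * x) - 1‖ := by
  have hsin := mul_abs_le_abs_sin (x := x / 2) (by rw [abs_div, abs_two]; linarith)
  rw [norm_exp_I_mul_ofReal_sub_one, norm_mul, Real.norm_eq_abs, Real.norm_eq_abs, abs_two,
    abs_div, abs_two] at *
  linarith

theorem hasDerivAt_exp_I_mul (t : ℝ) :
    HasDerivAt (fun t : ℝ => exp (I * t)) (I * exp (I * t)) t := by
  simpa [mul_comm] using ((hasDerivAt_id (t : ℂ)).const_mul I).cexp.comp_ofReal

theorem norm_sub_exp_I_mul_sub_le {z z' : ℝ → ℂ} {S : Set ℝ} {M a b : ℝ} (hS : Convex ℝ S)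
    (hz : ∀ t ∈ S, HasDerivAt z (z' t) t) (hM : ∀ t ∈ S, ‖z' t - I * exp (I * t)‖ ≤ M)
    (ha : a ∈ S) (hb : b ∈ S) :
    ‖(z b - z a) - (exp (I * b) - exp (I * a))‖ ≤ M * |b - a| := by
  have := hS.norm_image_sub_le_of_norm_hasDerivWithin_le
    (fun t ht => ((hz t ht).sub (hasDerivAt_exp_I_mul t)).hasDerivWithinAt) hM ha hb
  simpa only [Pi.sub_apply, sub_sub_sub_comm, Real.norm_eq_abs] using this

theorem exp_I_mul_sub_two_pi (x : ℝ) : exp (I * ↑(x - 2 * π)) = exp (I * x) := by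
  rw [ofReal_sub, mul_sub, Complex.exp_sub]
  push_cast
  rw [show I * (2 * π) = 2 * π * I by ring, exp_two_pi_mul_I, div_one]

theorem abs_sub_two_pi_le_of_hasDerivAt_near_exp {z z' : ℝ → ℂ} {S : Set ℝ} {M δ T : ℝ}
    (hS : Convex ℝ S) (hz : ∀ t ∈ S, HasDerivAt z (z' t) t)
    (hM : ∀ t ∈ S, ‖z' t - I * exp (I * t)‖ ≤ M) (hM4 : M ≤ 1 / 4)
    (h2π : 2 * π ∈ S) (hT : T ∈ S) (hTπ : |T - 2 * π| ≤ π)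
    (hperiod : z T = z 0) (hclose : ‖z (2 * π) - z 0‖ ≤ δ) :
    |T - 2 * π| ≤ 4 * δ := by
  have hmvt := norm_sub_exp_I_mul_sub_le hS hz hM h2π hT
  have hexp : exp (I * T) - exp (I * ↑(2 * π)) = exp (I * ↑(T - 2 * π)) - 1 := by
    rw [exp_I_mul_sub_two_pi, ← exp_I_mul_sub_two_pi (2 * π), sub_self, ofReal_zero, mul_zero,
      Complex.exp_zero]
  have hclose' : ‖z T - z (2 * π)‖ ≤ δ := by rwa [hperiod, norm_sub_rev]
  have hupper : ‖exp (I * ↑(T - 2 * π)) - 1‖ ≤ δ + M * |T - 2 * π| := by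
    rw [← hexp, ← sub_sub_cancel (z T - z (2 * π)) (exp (I * T) - exp (I * ↑(2 * π)))]
    exact (norm_sub_le _ _).trans (add_le_add hclose' hmvt)
  have hlower := two_div_pi_mul_abs_le_norm_exp_I_mul_sub_one hTπ
  have hhalf : 1 / 2 ≤ 2 / π := by
    rw [div_le_div_iff₀ two_pos pi_pos]; linarith [pi_lt_four]
  nlinarith [abs_nonneg (T - 2 * π)]

theorem mul_pow_le_of_le_div {K s c : ℝ} {n : ℕ} (hK : 0 < K) (hs : 0 ≤ s) (hs1 : s ≤ 1)
    (hn : n ≠ 0) (hsK : s ≤ c / K) : K * s ^ n ≤ c := by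
  calc K * s ^ n ≤ K * (c / K) := by gcongr; exact (pow_le_of_le_one hs hs1 hn).trans hsK
    _ = c := by field_simp

theorem period_estimate_general
    (ε K C₀ : ℝ) (hε : 0 < ε) (hK : 0 < K) (hC₀ : 0 < C₀)
    (zhat zhat' : ℝ → ℝ → ℂ) (T : ℝ → ℝ)
    (hsmooth : ∀ s ∈ Set.Ioc (0 : ℝ) ε,
      (∀ t : ℝ, HasDerivAt (zhat s) (zhat' s t) t) ∧ Continuous (zhat' s))
    (hT : ∀ s ∈ Set.Ioc (0 : ℝ) ε,
      T s ∈ Set.Icc (2 * Real.pi - 1 / 2) (2 * Real.pi + 1 / 2))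
    (h1 : ∀ s ∈ Set.Ioc (0 : ℝ) ε,
      ∀ t ∈ Set.Icc (2 * Real.pi - 1 / 2) (2 * Real.pi + 1 / 2),
        ‖zhat' s t - Complex.I * Complex.exp (Complex.I * (t : ℂ))‖ ≤ K * s ^ 4)
    (h2 : ∀ s ∈ Set.Ioc (0 : ℝ) ε,
      ‖zhat s (2 * Real.pi) - zhat s 0‖ ≤ C₀ * s ^ 5)
    (h3 : ∀ s ∈ Set.Ioc (0 : ℝ) ε, zhat s (T s) = zhat s 0) :
    ∃ C₁ : ℝ, 0 < C₁ ∧ ∃ s₀ : ℝ, 0 < s₀ ∧ s₀ ≤ ε ∧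
      ∀ s, 0 < s → s ≤ s₀ → |T s - 2 * Real.pi| ≤ C₁ * s ^ 5 := by
  refine ⟨4 * C₀, by positivity, min ε (min 1 (1 / 4 / K)), by positivity, min_le_left _ _, ?_⟩
  intro s hs hs₀
  simp only [le_min_iff] at hs₀
  obtain ⟨hsε, hs1, hsK⟩ := hs₀
  have hs' : s ∈ Set.Ioc 0 ε := ⟨hs, hsε⟩
  have hTs := hT s hs'
  have hTπ : |T s - 2 * π| ≤ π := by
    rw [abs_le]; constructor <;> linarith [hTs.1, hTs.2, pi_gt_three]
  have hcentre : 2 * π ∈ Set.Icc (2 * π - 1 / 2) (2 * π + 1 / 2) := by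
    constructor <;> linarith
  have hKs : K * s ^ 4 ≤ 1 / 4 := mul_pow_le_of_le_div hK hs.le hs1 four_ne_zero hsK
  have hθ := abs_sub_two_pi_le_of_hasDerivAt_near_exp (convex_Icc _ _)
    (fun t _ => (hsmooth s hs').1 t) (h1 s hs') hKs hcentre hTs hTπ (h3 s hs') (h2 s hs')
  linarith

/-- Quantitative estimate `T_s = 2π + O(s⁵)` for the period of the
rescaled chain. -/
theorem period_estimate
    (ε K C₀ : ℝ) (hε : 0 < ε) (hK : 0 < K) (hC₀ : 0 < C₀)
    (zhat zhat' : ℝ → ℝ → ℂ) (T : ℝ → ℝ)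
    (hsmooth : ∀ s ∈ Set.Ioc (0 : ℝ) ε,
      (∀ t : ℝ, HasDerivAt (zhat s) (zhat' s t) t) ∧ Continuous (zhat' s))
    (hT : ∀ s ∈ Set.Ioc (0 : ℝ) ε,
      T s ∈ Set.Icc (2 * Real.pi - 1 / 2) (2 * Real.pi + 1 / 2))
    (h1 : ∀ s ∈ Set.Ioc (0 : ℝ) ε,
      ∀ t ∈ Set.Icc (2 * Real.pi - 1 / 2) (2 * Real.pi + 1 / 2),
        ‖zhat' s t - Complex.I * Complex.exp (Complex.I * (t : ℂ))‖ ≤ K * s ^ 4)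
    (h2 : ∀ s ∈ Set.Ioc (0 : ℝ) ε,
      ‖zhat s (2 * Real.pi) - zhat s 0‖ ≤ C₀ * s ^ 5)
    (h3 : ∀ s ∈ Set.Ioc (0 : ℝ) ε, zhat s (T s) = zhat s 0)
    (h4 : Filter.Tendsto T (nhdsWithin 0 (Set.Ioi 0)) (nhds (2 * Real.pi))) :
    ∃ C₁ : ℝ, 0 < C₁ ∧ ∃ s₀ : ℝ, 0 < s₀ ∧ s₀ ≤ ε ∧
      ∀ s, 0 < s → s ≤ s₀ → |T s - 2 * Real.pi| ≤ C₁ * s ^ 5 :=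
  period_estimate_general ε K C₀ hε hK hC₀ zhat zhat' T hsmooth hT h1 h2 h3
end

section
/- Let a ∈ ℝ, ε > 0 and Γ > 0. For each k ∈ ℤ let γ_k : [0, ε) → ℂ be of class C⁴ with γ_{−k}(s) = conj(γ_k(s)), γ₀(s) = 1 for all s, and | γ_k^{(ℓ)}(s) | ≤ Γ for all k ∈ ℤ, 0 ≤ ℓ ≤ 4 and s ∈ [0, ε). Suppose that there are constants C_j > 0 and functions R_j, S_j : [0, ε) → ℂ of class C⁴ with | R_j^{(ℓ)}(s) | ≤ C_j·s^{5−ℓ} and | S_j^{(ℓ)}(s) | ≤ C_j·s^{5−ℓ} for 0 ≤ ℓ ≤ 4 and all s, such that for all s ∈ [0, ε): (I) conj(γ_{j+1}(s)) − (4/3)·(j+3)·a·s⁴·conj(γ_{j+3}(s)) = R_j(s) for every integer j ≥ 1, and (II) conj(γ_j(s)) + (2/3)·a·s⁴·conj(γ_{j−2}(s)) − (4/3)·j·a·s⁴·conj(γ_{j+2}(s)) = S_j(s) for every integer j ≥ 2. Then a = 0. -/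
/-!
The three relations (I) for `j = 3`, (I) for `j = 1` and (II) for `j = 2` are solved one after
the other as `s → 0⁺`. With `γ₆ = O(1)`, (I) for `j = 3` gives `γ₄ = O(s⁴)`; then (I) for `j = 1`
gives `γ₂ = O(s⁵)`. In (II) for `j = 2` the middle term is `(2/3) a s⁴ γ₀ = (2/3) a s⁴`, while
every other term is now `O(s⁵)`, so `a s⁴ = O(s⁵)` and hence `a = 0`.
-/

open Complex ComplexConjugate Set Filter Topology Asymptotics

lemma eventually_mem_Ico_nhdsGT {ε : ℝ} (hε : 0 < ε) : ∀ᶠ s in 𝓝[>] (0 : ℝ), s ∈ Ico 0 ε :=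
  mem_of_superset (Ioo_mem_nhdsGT hε) Ioo_subset_Ico_self

lemma tendsto_ofReal_nhdsGT_zero : Tendsto (fun s : ℝ => (s : ℂ)) (𝓝[>] 0) (𝓝 0) :=
  (continuous_ofReal.tendsto' 0 0 ofReal_zero).mono_left nhdsWithin_le_nhds

lemma isBigO_ofReal_pow_of_norm_le_on_Ico {ε C : ℝ} {n : ℕ} {f : ℝ → ℂ} (hε : 0 < ε)
    (h : ∀ s ∈ Ico 0 ε, ‖f s‖ ≤ C * s ^ n) :
    f =O[𝓝[>] 0] fun s => (s : ℂ) ^ n :=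
  IsBigO.of_bound C <| (eventually_mem_Ico_nhdsGT hε).mono fun s hs => by
    rw [norm_pow, norm_real, Real.norm_of_nonneg hs.1]
    exact h s hs

lemma isLittleO_ofReal_pow_pow_nhdsGT {m n : ℕ} (h : n < m) :
    (fun s : ℝ => (s : ℂ) ^ m) =o[𝓝[>] 0] fun s => (s : ℂ) ^ n :=
  (isLittleO_pow_pow h).comp_tendsto tendsto_ofReal_nhdsGT_zero

lemma isBigO_ofReal_pow_pow_nhdsGT {m n : ℕ} (h : n ≤ m) :
    (fun s : ℝ => (s : ℂ) ^ m) =O[𝓝[>] 0] fun s => (s : ℂ) ^ n := by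
  rcases h.eq_or_lt with rfl | h
  · exact isBigO_refl _ _
  · exact (isLittleO_ofReal_pow_pow_nhdsGT h).isBigO

lemma Asymptotics.IsBigO.const_mul_ofReal_pow_mul {l : Filter ℝ} {f : ℝ → ℂ} {m : ℕ}
    (hf : f =O[l] fun s => (s : ℂ) ^ m) (c : ℂ) (n : ℕ) :
    (fun s => c * (s : ℂ) ^ n * f s) =O[l] fun s => (s : ℂ) ^ (n + m) := by
  simpa only [pow_add, mul_assoc] using
    ((isBigO_refl (fun s : ℝ => (s : ℂ) ^ n) l).mul hf).const_mul_left c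

lemma eq_zero_of_isBigO_const_mul_pow_succ {c : ℂ} {n : ℕ}
    (h : (fun s : ℝ => c * (s : ℂ) ^ n) =O[𝓝[>] 0] fun s => (s : ℂ) ^ (n + 1)) : c = 0 := by
  by_contra hc
  have hlo : (fun s : ℝ => (s : ℂ) ^ n) =o[𝓝[>] 0] fun s => (s : ℂ) ^ n :=
    (isLittleO_const_mul_left_iff hc).1
      (h.trans_isLittleO (isLittleO_ofReal_pow_pow_nhdsGT n.lt_succ_self))
  refine isLittleO_irrefl ?_ hlo
  exact (eventually_nhdsWithin_of_forall (s := Ioi (0 : ℝ)) fun s hs =>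
    pow_ne_zero n (ofReal_ne_zero.2 (ne_of_gt hs))).frequently

theorem fourier_coefficients_force_umbilicity_general
    (a ε Γ : ℝ) (hε : 0 < ε)
    (γ : ℤ → ℝ → ℂ)
    (hγ0 : ∀ s ∈ Set.Ico (0 : ℝ) ε, γ 0 s = 1)
    (hbd : ∀ k : ℤ, ∀ ℓ : ℕ, ℓ ≤ 4 → ∀ s ∈ Set.Ico (0 : ℝ) ε,
      ‖iteratedDerivWithin ℓ (γ k) (Set.Ico 0 ε) s‖ ≤ Γ)
    (hI : ∀ j : ℕ, 1 ≤ j → ∃ C : ℝ, 0 < C ∧ ∃ R : ℝ → ℂ,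
      ContDiffOn ℝ 4 R (Set.Ico 0 ε) ∧
      (∀ ℓ : ℕ, ℓ ≤ 4 → ∀ s ∈ Set.Ico (0 : ℝ) ε,
        ‖iteratedDerivWithin ℓ R (Set.Ico 0 ε) s‖ ≤ C * s ^ (5 - ℓ)) ∧
      ∀ s ∈ Set.Ico (0 : ℝ) ε,
        conj (γ ((j : ℤ) + 1) s)
          - (4 / 3) * ((j : ℂ) + 3) * (a : ℂ) * (s : ℂ) ^ 4 * conj (γ ((j : ℤ) + 3) s) = R s)
    (hII : ∀ j : ℕ, 2 ≤ j → ∃ C : ℝ, 0 < C ∧ ∃ S : ℝ → ℂ,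
      ContDiffOn ℝ 4 S (Set.Ico 0 ε) ∧
      (∀ ℓ : ℕ, ℓ ≤ 4 → ∀ s ∈ Set.Ico (0 : ℝ) ε,
        ‖iteratedDerivWithin ℓ S (Set.Ico 0 ε) s‖ ≤ C * s ^ (5 - ℓ)) ∧
      ∀ s ∈ Set.Ico (0 : ℝ) ε,
        conj (γ (j : ℤ) s)
          + (2 / 3) * (a : ℂ) * (s : ℂ) ^ 4 * conj (γ ((j : ℤ) - 2) s)
          - (4 / 3) * (j : ℂ) * (a : ℂ) * (s : ℂ) ^ 4 * conj (γ ((j : ℤ) + 2) s) = S s) :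
    a = 0 := by
  have hs := eventually_mem_Ico_nhdsGT hε
  obtain ⟨C₁, -, R₁, -, hR₁, hR₁_eq⟩ := hI 1 le_rfl
  obtain ⟨C₃, -, R₃, -, hR₃, hR₃_eq⟩ := hI 3 (by norm_num)
  obtain ⟨C₂, -, S₂, -, hS₂, hS₂_eq⟩ := hII 2 le_rfl
  have hO : ∀ {C : ℝ} {R : ℝ → ℂ}, (∀ ℓ : ℕ, ℓ ≤ 4 → ∀ s ∈ Ico (0 : ℝ) ε,
      ‖iteratedDerivWithin ℓ R (Ico 0 ε) s‖ ≤ C * s ^ (5 - ℓ)) →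
      R =O[𝓝[>] 0] fun s => (s : ℂ) ^ 5 := fun h =>
    isBigO_ofReal_pow_of_norm_le_on_Ico hε fun s hs => by simpa using h 0 (Nat.zero_le 4) s hs
  have hγ₆ : (fun s => conj (γ 6 s)) =O[𝓝[>] 0] fun s => (s : ℂ) ^ 0 :=
    isBigO_ofReal_pow_of_norm_le_on_Ico hε fun s hs => by simpa using hbd 6 0 (by norm_num) s hs
  have hγ₄ : (fun s => conj (γ 4 s)) =O[𝓝[>] 0] fun s => (s : ℂ) ^ 4 := by
    refine EventuallyEq.trans_isBigO (f₂ := fun s => R₃ s + 8 * a * (s : ℂ) ^ 4 * conj (γ 6 s))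
      (hs.mono fun s hs => by linear_combination (norm := (push_cast; ring_nf)) hR₃_eq s hs) ?_
    exact ((hO hR₃).trans (isBigO_ofReal_pow_pow_nhdsGT (by norm_num))).add
      (hγ₆.const_mul_ofReal_pow_mul _ 4)
  have hγ₂ : (fun s => conj (γ 2 s)) =O[𝓝[>] 0] fun s => (s : ℂ) ^ 5 := by
    refine EventuallyEq.trans_isBigO
      (f₂ := fun s => R₁ s + 16 / 3 * a * (s : ℂ) ^ 4 * conj (γ 4 s))
      (hs.mono fun s hs => by linear_combination (norm := (push_cast; ring_nf)) hR₁_eq s hs) ?_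
    exact (hO hR₁).add ((hγ₄.const_mul_ofReal_pow_mul _ 4).trans
      (isBigO_ofReal_pow_pow_nhdsGT (by norm_num)))
  have key :
      (fun s : ℝ => (2 / 3 * a : ℂ) * (s : ℂ) ^ 4) =O[𝓝[>] 0] fun s => (s : ℂ) ^ (4 + 1) := by
    refine EventuallyEq.trans_isBigO
      (f₂ := fun s => S₂ s - conj (γ 2 s) + 8 / 3 * a * (s : ℂ) ^ 4 * conj (γ 4 s))
      (hs.mono fun s hs => ?_) ?_
    · have := hS₂_eq s hs
      norm_num [hγ0 s hs] at this
      linear_combination this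
    exact ((hO hS₂).sub hγ₂).add ((hγ₄.const_mul_ofReal_pow_mul _ 4).trans
      (isBigO_ofReal_pow_pow_nhdsGT (by norm_num)))
  simpa using eq_zero_of_isBigO_const_mul_pow_succ key

/-- The moment conditions on the Fourier coefficients `γ_k` of the
stationarity data force the vanishing of the umbilical coefficient: `a = 0`. -/
theorem fourier_coefficients_force_umbilicity
    (a ε Γ : ℝ) (hε : 0 < ε) (hΓ : 0 < Γ)
    (γ : ℤ → ℝ → ℂ)
    (hC4 : ∀ k : ℤ, ContDiffOn ℝ 4 (γ k) (Set.Ico 0 ε))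
    (hconj : ∀ k : ℤ, ∀ s ∈ Set.Ico (0 : ℝ) ε, γ (-k) s = conj (γ k s))
    (hγ0 : ∀ s ∈ Set.Ico (0 : ℝ) ε, γ 0 s = 1)
    (hbd : ∀ k : ℤ, ∀ ℓ : ℕ, ℓ ≤ 4 → ∀ s ∈ Set.Ico (0 : ℝ) ε,
      ‖iteratedDerivWithin ℓ (γ k) (Set.Ico 0 ε) s‖ ≤ Γ)
    (hI : ∀ j : ℕ, 1 ≤ j → ∃ C : ℝ, 0 < C ∧ ∃ R : ℝ → ℂ,
      ContDiffOn ℝ 4 R (Set.Ico 0 ε) ∧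
      (∀ ℓ : ℕ, ℓ ≤ 4 → ∀ s ∈ Set.Ico (0 : ℝ) ε,
        ‖iteratedDerivWithin ℓ R (Set.Ico 0 ε) s‖ ≤ C * s ^ (5 - ℓ)) ∧
      ∀ s ∈ Set.Ico (0 : ℝ) ε,
        conj (γ ((j : ℤ) + 1) s)
          - (4 / 3) * ((j : ℂ) + 3) * (a : ℂ) * (s : ℂ) ^ 4 * conj (γ ((j : ℤ) + 3) s) = R s)
    (hII : ∀ j : ℕ, 2 ≤ j → ∃ C : ℝ, 0 < C ∧ ∃ S : ℝ → ℂ,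
      ContDiffOn ℝ 4 S (Set.Ico 0 ε) ∧
      (∀ ℓ : ℕ, ℓ ≤ 4 → ∀ s ∈ Set.Ico (0 : ℝ) ε,
        ‖iteratedDerivWithin ℓ S (Set.Ico 0 ε) s‖ ≤ C * s ^ (5 - ℓ)) ∧
      ∀ s ∈ Set.Ico (0 : ℝ) ε,
        conj (γ (j : ℤ) s)
          + (2 / 3) * (a : ℂ) * (s : ℂ) ^ 4 * conj (γ ((j : ℤ) - 2) s)
          - (4 / 3) * (j : ℂ) * (a : ℂ) * (s : ℂ) ^ 4 * conj (γ ((j : ℤ) + 2) s) = S s) :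
    a = 0 :=
  fourier_coefficients_force_umbilicity_general a ε Γ hε γ hγ0 hbd hI hII
end
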